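/- arXiv:2312.13227 — 7 statements merged into one kernel-verified Lean document; each statement's English description precedes it below -/
import Mathlib

section
/- Let (X, c_X) and (Y, c_Y) be closure spaces, A ⊆ X closed with subspace closure c_A, and f : A → Y a map of closure spaces. Define Z = Y ⊔ (X \ A), g : X → Z by g(x) = f(x) for x ∈ A and g(x) = x otherwise, and c_Z B = c_Y(B ∩ Y) ∪ g(c_X(B ∩ (X \ A))) for B ⊆ Z. Then for every B ⊆ Y ⊆ Z, c_Z B = c_Y B; in particular Y is closed in (Z, c_Z), so the inclusion j : Y → Z is a closed inclusion. -/
open Classical in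
/-- The map `g : X → Z = Y ⊔ (X \ A)` of the pushout of `f : A → Y` along `A ↪ X`:
`g = f` on `A` and the identity on `X \ A`. -/
noncomputable def pushoutMap {X Y : Type*} (A : Set X) (f : X → Y) (x : X) :
    Y ⊕ {x : X // x ∉ A} :=
  if h : x ∈ A then Sum.inl (f x) else Sum.inr ⟨x, h⟩

/-- The closure operator of the pushout `Z = Y ⊔ (X \ A)`:
`c_Z B = c_Y (B ∩ Y) ∪ g (c_X (B ∩ (X \ A)))`. -/
noncomputable def pushoutClosure {X Y : Type*} (A : Set X) (f : X → Y)
    (cX : Set X → Set X) (cY : Set Y → Set Y)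
    (B : Set (Y ⊕ {x : X // x ∉ A})) : Set (Y ⊕ {x : X // x ∉ A}) :=
  Sum.inl '' cY (Sum.inl ⁻¹' B) ∪
    pushoutMap A f '' cX (Subtype.val '' (Sum.inr ⁻¹' B))

/-- Lemma 2.4: in the pushout of a closure-space map `f : (A, c_A) → (Y, c_Y)` along a
closed inclusion `A ↪ (X, c_X)`, the closure of the pushout restricts on `Y` to `c_Y`;
in particular `Y` is closed in `Z`, so `j : Y ↪ Z` is a closed inclusion. -/
theorem pushout_closed_inclusion {X Y : Type*} (cX : Set X → Set X) (cY : Set Y → Set Y)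
    (hXempty : cX ∅ = ∅) (hXext : ∀ B : Set X, B ⊆ cX B)
    (hXunion : ∀ B B' : Set X, cX (B ∪ B') = cX B ∪ cX B')
    (hYempty : cY ∅ = ∅) (hYext : ∀ B : Set Y, B ⊆ cY B)
    (hYunion : ∀ B B' : Set Y, cY (B ∪ B') = cY B ∪ cY B')
    (A : Set X) (hA : cX A = A) (f : X → Y)
    (hf : ∀ B : Set X, B ⊆ A → f '' (cX B ∩ A) ⊆ cY (f '' B)) :
    (∀ B : Set Y, pushoutClosure A f cX cY (Sum.inl '' B) = Sum.inl '' cY B) ∧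
    pushoutClosure A f cX cY (Set.range (Sum.inl : Y → Y ⊕ {x : X // x ∉ A})) =
      Set.range Sum.inl := by
  have key : ∀ B : Set Y, pushoutClosure A f cX cY (Sum.inl '' B) = Sum.inl '' cY B := by
    intro B
    unfold pushoutClosure
    have h1 : ((Sum.inl : Y → Y ⊕ {x : X // x ∉ A}) ⁻¹' (Sum.inl '' B)) = B := by
      ext y; simp
    have h2 : ((Sum.inr : {x : X // x ∉ A} → Y ⊕ {x : X // x ∉ A}) ⁻¹' ((Sum.inl : Y → Y ⊕ {x : X // x ∉ A}) '' B)) = ∅ := by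
      ext x; simp
    rw [h1, h2, Set.image_empty, hXempty, Set.image_empty, Set.union_empty]
  refine ⟨key, ?_⟩
  have : (Set.range (Sum.inl : Y → Y ⊕ {x : X // x ∉ A})) = Sum.inl '' Set.univ := by
    rw [Set.image_univ]
  rw [this, key, Set.eq_univ_of_univ_subset (hYext Set.univ), Set.image_univ]
end

section
/- With Z, g, j, c_Z as in the pushout of a closure-space map f : A → Y along a closed inclusion A ↪ X (Z = Y ⊔ (X \ A), c_Z B = c_Y(B ∩ Y) ∪ g(c_X(B ∩ (X \ A)))), the operator c_Z is a closure operator on Z: c_Z ∅ = ∅, B ⊆ c_Z B, and c_Z(B ∪ B') = c_Z B ∪ c_Z B'. -/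
/-- The pushout operator `c_Z` is a closure operator on `Z = Y ⊔ (X \ A)`:
`c_Z ∅ = ∅`, `B ⊆ c_Z B`, and `c_Z (B ∪ B') = c_Z B ∪ c_Z B'`. -/
theorem pushoutClosure_is_closure {X Y : Type*} (cX : Set X → Set X) (cY : Set Y → Set Y)
    (hXempty : cX ∅ = ∅) (hXext : ∀ B : Set X, B ⊆ cX B)
    (hXunion : ∀ B B' : Set X, cX (B ∪ B') = cX B ∪ cX B')
    (hYempty : cY ∅ = ∅) (hYext : ∀ B : Set Y, B ⊆ cY B)
    (hYunion : ∀ B B' : Set Y, cY (B ∪ B') = cY B ∪ cY B')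
    (A : Set X) (hA : cX A = A) (f : X → Y)
    (hf : ∀ B : Set X, B ⊆ A → f '' (cX B ∩ A) ⊆ cY (f '' B)) :
    pushoutClosure A f cX cY ∅ = ∅ ∧
    (∀ B : Set (Y ⊕ {x : X // x ∉ A}), B ⊆ pushoutClosure A f cX cY B) ∧
    (∀ B B' : Set (Y ⊕ {x : X // x ∉ A}),
      pushoutClosure A f cX cY (B ∪ B') =
        pushoutClosure A f cX cY B ∪ pushoutClosure A f cX cY B') := by
  refine ⟨?_, ?_, ?_⟩
  · simp [pushoutClosure, hXempty, hYempty]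
  · intro B z hz
    cases z with
    | inl y =>
        exact Or.inl ⟨y, hYext _ hz, rfl⟩
    | inr x =>
        refine Or.inr ⟨x.1, hXext _ ⟨x, hz, rfl⟩, ?_⟩
        simp [pushoutMap, x.2]
  · intro B B'
    simp only [pushoutClosure, Set.preimage_union, Set.image_union, hXunion, hYunion]
    ext z
    simp only [Set.mem_union]
    tauto
end

section
/- With Z, g, j, c_Z as in the pushout of a closure-space map f : (A, c_A) → (Y, c_Y) along a closed inclusion A ↪ (X, c_X), the map g : (X, c_X) → (Z, c_Z) is a map of closure spaces, i.e., g(c_X B) ⊆ c_Z(g B) for all B ⊆ X. -/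
private lemma mono_of_union {X : Type*} {c : Set X → Set X}
    (hu : ∀ B B' : Set X, c (B ∪ B') = c B ∪ c B') {s t : Set X} (h : s ⊆ t) :
    c s ⊆ c t := by
  have : c t = c s ∪ c t := by
    conv_lhs => rw [← Set.union_eq_self_of_subset_left h]
    exact hu s t
  rw [this]; exact Set.subset_union_left

/-- In the pushout of a closure-space map `f : (A, c_A) → (Y, c_Y)` along a closed
inclusion `A ↪ (X, c_X)`, the map `g : (X, c_X) → (Z, c_Z)` is a map of closure
spaces: `g (c_X B) ⊆ c_Z (g B)` for all `B ⊆ X`. -/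
theorem pushoutMap_is_closure_map {X Y : Type*} (cX : Set X → Set X) (cY : Set Y → Set Y)
    (hXempty : cX ∅ = ∅) (hXext : ∀ B : Set X, B ⊆ cX B)
    (hXunion : ∀ B B' : Set X, cX (B ∪ B') = cX B ∪ cX B')
    (hYempty : cY ∅ = ∅) (hYext : ∀ B : Set Y, B ⊆ cY B)
    (hYunion : ∀ B B' : Set Y, cY (B ∪ B') = cY B ∪ cY B')
    (A : Set X) (hA : cX A = A) (f : X → Y)
    (hf : ∀ B : Set X, B ⊆ A → f '' (cX B ∩ A) ⊆ cY (f '' B)) :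
    ∀ B : Set X,
      pushoutMap A f '' cX B ⊆ pushoutClosure A f cX cY (pushoutMap A f '' B) := by
  intro B
  rintro z ⟨x, hx, rfl⟩
  have hsplit : B = (B ∩ A) ∪ (B \ A) := (Set.inter_union_diff B A).symm
  rw [hsplit, hXunion] at hx
  -- the two key set inclusions
  have h1 : f '' (B ∩ A) ⊆ Sum.inl ⁻¹' (pushoutMap A f '' B) := by
    rintro y ⟨a, ⟨haB, haA⟩, rfl⟩
    refine ⟨a, haB, ?_⟩
    simp [pushoutMap, haA]
  have h2 : B \ A ⊆ Subtype.val '' (Sum.inr ⁻¹' (pushoutMap A f '' B)) := by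
    rintro a ⟨haB, haA⟩
    exact ⟨⟨a, haA⟩, ⟨a, haB, by simp [pushoutMap, haA]⟩, rfl⟩
  rcases hx with hx | hx
  · -- x ∈ cX (B ∩ A) ⊆ A
    have hxA : x ∈ A := by
      have := mono_of_union hXunion (Set.inter_subset_right (s := B) (t := A)) hx
      rwa [hA] at this
    have hfx : f x ∈ cY (f '' (B ∩ A)) :=
      hf (B ∩ A) Set.inter_subset_right ⟨x, ⟨hx, hxA⟩, rfl⟩
    have : f x ∈ cY (Sum.inl ⁻¹' (pushoutMap A f '' B)) :=
      mono_of_union hYunion h1 hfx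
    left
    refine ⟨f x, this, ?_⟩
    simp [pushoutMap, hxA]
  · right
    exact ⟨x, mono_of_union hXunion h2 hx, rfl⟩
end

section
/- The pushout of a topological space along a closed constant map onto one point of the two-point indiscrete space fails to be topological in closure spaces: let Y = {0, 1} with the indiscrete closure (c_Y ∅ = ∅ and c_Y S = Y for nonempty S), let X = D^n (the closed n-disk, n ≥ 1) with A = S^{n-1} its boundary sphere, and f : A → Y the constant map with value 0. In the closure-space pushout (Z, c_Z) with Z = Y ⊔ (D^n \ S^{n-1}), one has c_Z(D^n \ S^{n-1}) = (D^n \ S^{n-1}) ∪ {0} and c_Z(c_Z(D^n \ S^{n-1})) = (D^n \ S^{n-1}) ∪ {0, 1}; in particular c_Z is not idempotent, so (Z, c_Z) is not a topological space. -/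
open Classical in
/-- The indiscrete closure on a type: `∅ ↦ ∅` and every nonempty set to the whole space. -/
noncomputable def indiscreteClosure (Y : Type*) (S : Set Y) : Set Y :=
  if S = ∅ then ∅ else Set.univ

/-!
The open cell `U = D^n \ S^{n-1}` is dense in `D^n`, so `c_Z U` is `U` together with the
image `{0}` of the boundary. Now `c_Z U` meets `Y` in the nonempty set `{0}`, whose indiscrete
closure is all of `Y`; hence the point `1` appears in `c_Z (c_Z U)` but not in `c_Z U`.
-/

open Set

section Pushout

variable {X Y : Type*} (A : Set X) (f : X → Y)

theorem range_pushoutMap :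
    range (pushoutMap A f) = Sum.inl '' (f '' A) ∪ range Sum.inr := by
  ext z
  constructor
  · rintro ⟨x, rfl⟩
    by_cases hx : x ∈ A
    · exact Or.inl ⟨f x, mem_image_of_mem f hx, by simp [pushoutMap, hx]⟩
    · exact Or.inr ⟨⟨x, hx⟩, by simp [pushoutMap, hx]⟩
  · rintro (⟨_, ⟨x, hx, rfl⟩, rfl⟩ | ⟨⟨x, hx⟩, rfl⟩)
    · exact ⟨x, by simp [pushoutMap, hx]⟩
    · exact ⟨x, by simp [pushoutMap, hx]⟩

theorem pushoutClosure_of_range_inr_subset (cX : Set X → Set X) (cY : Set Y → Set Y)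
    (hdense : cX Aᶜ = univ) {B : Set (Y ⊕ {x : X // x ∉ A})} (hB : range Sum.inr ⊆ B) :
    pushoutClosure A f cX cY B = Sum.inl '' (cY (Sum.inl ⁻¹' B) ∪ f '' A) ∪ range Sum.inr := by
  have hinr : Sum.inr ⁻¹' B = univ := eq_univ_of_forall fun x => hB (mem_range_self x)
  rw [pushoutClosure, hinr, image_univ, Subtype.range_coe_subtype]
  change _ ∪ pushoutMap A f '' cX Aᶜ = _
  rw [hdense, image_univ, range_pushoutMap, image_union, union_assoc]

end Pushout

theorem indiscreteClosure_empty (Y : Type*) : indiscreteClosure Y ∅ = ∅ := by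
  simp [indiscreteClosure]

theorem indiscreteClosure_of_nonempty {Y : Type*} {S : Set Y} (hS : S.Nonempty) :
    indiscreteClosure Y S = univ := by
  simp [indiscreteClosure, hS.ne_empty]

theorem closure_compl_sphere_closedBall {E : Type*} [NormedAddCommGroup E] [NormedSpace ℝ E]
    {r : ℝ} (hr : r ≠ 0) :
    closure {x : Metric.closedBall (0 : E) r | ‖(x : E)‖ = r}ᶜ = univ := by
  have hball : Subtype.val '' {x : Metric.closedBall (0 : E) r | ‖(x : E)‖ = r}ᶜ
      = Metric.ball 0 r := by
    ext y
    simp only [mem_image, mem_compl_iff, mem_ofPred_eq, Subtype.exists, Metric.mem_closedBall,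
      Metric.mem_ball, dist_zero_right, exists_and_right, exists_eq_right]
    exact ⟨fun ⟨hle, hne⟩ => hle.lt_of_ne hne, fun hlt => ⟨hlt.le, hlt.ne⟩⟩
  refine eq_univ_of_forall fun x => ?_
  rw [closure_subtype, hball, closure_ball 0 hr]
  exact x.2

/-- Example 3.1: attach an `n`-cell (`n ≥ 1`) to the two-point indiscrete space
`Y = {0, 1}` (modeled as `Bool`, with `0 = false`, `1 = true`) along the constant map
with value `0` on the boundary sphere `S^{n-1}` of the disk `D^n`.  In the closure-space
pushout, `c_Z (D^n \ S^{n-1}) = (D^n \ S^{n-1}) ∪ {0}` and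
`c_Z² (D^n \ S^{n-1}) = (D^n \ S^{n-1}) ∪ {0, 1}`, so `c_Z` is not idempotent and the
pushout is not a topological space. -/
theorem cell_attachment_indiscrete_not_topological (n : ℕ) (hn : 1 ≤ n) :
    letI D : Type := ↥(Metric.closedBall (0 : EuclideanSpace ℝ (Fin n)) 1)
    letI A : Set D := {x | ‖(x : EuclideanSpace ℝ (Fin n))‖ = 1}
    letI f : D → Bool := fun _ => false
    letI cX : Set D → Set D := fun S => closure S
    letI cZ := pushoutClosure A f cX (indiscreteClosure Bool)
    letI U : Set (Bool ⊕ {x : D // x ∉ A}) := Set.range Sum.inr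
    cZ U = U ∪ {Sum.inl false} ∧
    cZ (cZ U) = U ∪ {Sum.inl false, Sum.inl true} ∧
    cZ (cZ U) ≠ cZ U := by
  set A : Set (Metric.closedBall (0 : EuclideanSpace ℝ (Fin n)) 1) :=
    {x | ‖(x : EuclideanSpace ℝ (Fin n))‖ = 1}
  set U : Set (Bool ⊕ {x // x ∉ A}) := range Sum.inr
  have : Nontrivial (EuclideanSpace ℝ (Fin n)) := by
    have : Nonempty (Fin n) := ⟨⟨0, hn⟩⟩
    infer_instance
  obtain ⟨e, he⟩ := exists_norm_eq (EuclideanSpace ℝ (Fin n)) zero_le_one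
  have hfA : (fun _ => false) '' A = {false} := Nonempty.image_const ⟨⟨e, by simp [he]⟩, he⟩ false
  have hdense : closure Aᶜ = univ := closure_compl_sphere_closedBall one_ne_zero
  have hclosure (B : Set (Bool ⊕ {x // x ∉ A})) (hB : U ⊆ B) :=
    pushoutClosure_of_range_inr_subset A (fun _ => false) (closure ·) (indiscreteClosure Bool)
      hdense hB
  have h1 : pushoutClosure A (fun _ => false) (closure ·) (indiscreteClosure Bool) U
      = U ∪ {Sum.inl false} := by
    rw [hclosure U subset_rfl]
    simp [U, hfA, indiscreteClosure_empty, union_comm]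
  have h2 : pushoutClosure A (fun _ => false) (closure ·) (indiscreteClosure Bool)
      (U ∪ {Sum.inl false}) = U ∪ {Sum.inl false, Sum.inl true} := by
    rw [hclosure _ subset_union_left, indiscreteClosure_of_nonempty ⟨false, by simp⟩]
    ext (b | x) <;> simp [U]
  refine ⟨h1, h1 ▸ h2, fun h => ?_⟩
  have htrue : Sum.inl true ∈ U ∪ {Sum.inl false} := by
    rw [← h1, ← h, h1, h2]; simp
  simp [U] at htrue
end

section
/- Let (A, c_A), (X, c_X), (Y, c_Y) be topological spaces (closure spaces with idempotent closure), let i : A ↪ X be a closed inclusion, and let f : A → Y be a closed map of closure spaces. Then the closure-space pushout (Z, c_Z) of f along i (Z = Y ⊔ (X \ A), c_Z B = c_Y(B ∩ Y) ∪ g(c_X(B ∩ (X \ A)))) satisfies c_Z(c_Z B) = c_Z B for all B ⊆ Z; i.e., (Z, c_Z) is a topological space, and hence the pushout agrees with the pushout in topological spaces. -/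
/-- Theorem 4.1(1): the closure-space pushout of a closed map `f : (A, c_A) → (Y, c_Y)`
of topological spaces along a closed inclusion `A ↪ (X, c_X)` of topological spaces is
again a topological space (its closure operator is idempotent); hence it agrees with the
pushout in topological spaces. -/
theorem pushout_topological {X Y : Type*} (cX : Set X → Set X) (cY : Set Y → Set Y)
    (hXempty : cX ∅ = ∅) (hXext : ∀ B : Set X, B ⊆ cX B)
    (hXunion : ∀ B B' : Set X, cX (B ∪ B') = cX B ∪ cX B')
    (hXidem : ∀ B : Set X, cX (cX B) = cX B)
    (hYempty : cY ∅ = ∅) (hYext : ∀ B : Set Y, B ⊆ cY B)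
    (hYunion : ∀ B B' : Set Y, cY (B ∪ B') = cY B ∪ cY B')
    (hYidem : ∀ B : Set Y, cY (cY B) = cY B)
    (A : Set X) (hA : cX A = A) (f : X → Y)
    (hf : ∀ B : Set X, B ⊆ A → f '' (cX B ∩ A) ⊆ cY (f '' B))
    (hfclosed : ∀ C : Set X, C ⊆ A → cX C ∩ A = C → cY (f '' C) = f '' C) :
    ∀ B : Set (Y ⊕ {x : X // x ∉ A}),
      pushoutClosure A f cX cY (pushoutClosure A f cX cY B) =
        pushoutClosure A f cX cY B := by
  have monoX : ∀ S T : Set X, S ⊆ T → cX S ⊆ cX T := by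
    intro S T h
    have : cX T = cX S ∪ cX T := by
      rw [← hXunion, Set.union_eq_self_of_subset_left h]
    rw [this]; exact Set.subset_union_left
  intro B
  set BY := (Sum.inl ⁻¹' B : Set Y) with hBY
  set BX := (Subtype.val '' (Sum.inr ⁻¹' B) : Set X) with hBX
  have hBXA : ∀ x ∈ BX, x ∉ A := by
    rintro x ⟨⟨x', hx'⟩, _, rfl⟩; exact hx'
  set D := pushoutClosure A f cX cY B with hD
  have hDY : (Sum.inl ⁻¹' D : Set Y) = cY BY ∪ f '' (cX BX ∩ A) := by
    ext y
    simp only [hD, pushoutClosure, Set.mem_preimage, Set.mem_union, Set.mem_image]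
    constructor
    · rintro (⟨y', hy', h⟩ | ⟨x, hx, h⟩)
      · left; cases h; exact hy'
      · right
        unfold pushoutMap at h
        by_cases hxA : x ∈ A
        · simp only [hxA, dif_pos, Sum.inl.injEq] at h
          exact ⟨x, ⟨hx, hxA⟩, h⟩
        · simp [hxA] at h
    · rintro (h | ⟨x, ⟨hx, hxA⟩, rfl⟩)
      · left; exact ⟨y, h, rfl⟩
      · right; exact ⟨x, hx, by simp [pushoutMap, hxA]⟩
  have hDX : (Subtype.val '' (Sum.inr ⁻¹' D) : Set X) = cX BX \ A := by
    ext x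
    simp only [hD, pushoutClosure, Set.mem_image, Set.mem_preimage, Set.mem_union,
      Set.mem_diff]
    constructor
    · rintro ⟨⟨x', hx'⟩, (⟨y, _, h⟩ | ⟨x'', hx'', h⟩), rfl⟩
      · cases h
      · unfold pushoutMap at h
        by_cases hxA : x'' ∈ A
        · simp [hxA] at h
        · simp only [hxA, dif_neg, not_false_iff, Sum.inr.injEq] at h
          obtain rfl : x'' = x' := congrArg Subtype.val h
          exact ⟨hx'', hx'⟩
    · rintro ⟨hx, hxA⟩
      exact ⟨⟨x, hxA⟩, Or.inr ⟨x, hx, by simp [pushoutMap, hxA]⟩, rfl⟩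
  have hBXsub : BX ⊆ cX BX \ A := fun x hx => ⟨hXext _ hx, hBXA x hx⟩
  have hkey : cX (cX BX \ A) = cX BX := by
    apply Set.Subset.antisymm
    · calc cX (cX BX \ A) ⊆ cX (cX BX) := monoX _ _ Set.diff_subset
        _ = cX BX := hXidem _
    · exact monoX _ _ hBXsub
  have hC : cY (f '' (cX BX ∩ A)) = f '' (cX BX ∩ A) := by
    apply hfclosed _ Set.inter_subset_right
    apply Set.Subset.antisymm
    · rintro x ⟨hx1, hx2⟩
      refine ⟨?_, hx2⟩
      have h1 : cX (cX BX ∩ A) ⊆ cX (cX BX) := monoX _ _ Set.inter_subset_left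
      exact (hXidem BX ▸ h1) hx1
    · exact fun x hx => ⟨hXext _ hx, hx.2⟩
  show pushoutClosure A f cX cY D = D
  have habs : Sum.inl '' (f '' (cX BX ∩ A)) ⊆ pushoutMap A f '' cX BX := by
    rintro z ⟨y, ⟨x, ⟨hx, hxA⟩, rfl⟩, rfl⟩
    exact ⟨x, hx, by simp [pushoutMap, hxA]⟩
  rw [show pushoutClosure A f cX cY D =
      Sum.inl '' cY (Sum.inl ⁻¹' D) ∪
        pushoutMap A f '' cX (Subtype.val '' (Sum.inr ⁻¹' D)) from rfl,
    hDY, hDX, hYunion, hYidem, hC, hkey, Set.image_union, hD]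
  rw [show pushoutClosure A f cX cY B =
      Sum.inl '' cY BY ∪ pushoutMap A f '' cX BX from rfl]
  rw [Set.union_assoc, Set.union_eq_self_of_subset_left habs]
end

section
/- Let (A, c_A), (X, c_X), (Y, c_Y) be topological spaces, i : A ↪ X a closed inclusion, and f : (A, c_A) → (Y, c_Y) a map of closure spaces. Suppose (a) the closure-space pushout (Z, c_Z) of f along i is a topological space (c_Z idempotent), and (b) for every closed set C ⊆ A there exists B ⊆ X \ A with (c_X B) ∩ A = C. Then f is a closed map. -/
/-! Given a closed `C ⊆ A`, choose `B ⊆ X \ A` with `c_X B ∩ A = C`. Since `B` misses `A`,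
`c_Z (g B) = g (c_X B)`, so `g (c_X B)` is closed in `Z` by idempotence of `c_Z`. Its part in `Y` is
`f (c_X B ∩ A) = f C`, and `c_Y (f C)` lies in the `Y`-part of `c_Z (g (c_X B))`, hence in `f C`. -/

section Pushout

variable {X Y : Type*} (A : Set X) (f : X → Y)

@[simp]
theorem pushoutMap_of_mem {x : X} (hx : x ∈ A) : pushoutMap A f x = Sum.inl (f x) :=
  dif_pos hx

@[simp]
theorem pushoutMap_of_notMem {x : X} (hx : x ∉ A) : pushoutMap A f x = Sum.inr ⟨x, hx⟩ :=
  dif_neg hx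

theorem inl_preimage_image_pushoutMap (S : Set X) :
    Sum.inl ⁻¹' (pushoutMap A f '' S) = f '' (S ∩ A) := by
  ext y
  constructor
  · rintro ⟨x, hxS, hxy⟩
    by_cases hxA : x ∈ A
    · rw [pushoutMap_of_mem A f hxA, Sum.inl.injEq] at hxy
      exact ⟨x, ⟨hxS, hxA⟩, hxy⟩
    · simp [hxA] at hxy
  · rintro ⟨x, ⟨hxS, hxA⟩, rfl⟩
    exact ⟨x, hxS, pushoutMap_of_mem A f hxA⟩

theorem val_image_inr_preimage_image_pushoutMap {S : Set X} (hS : S ⊆ Aᶜ) :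
    Subtype.val '' (Sum.inr ⁻¹' (pushoutMap A f '' S)) = S := by
  ext x
  constructor
  · rintro ⟨x', ⟨x, hxS, hxx'⟩, rfl⟩
    rw [pushoutMap_of_notMem A f (hS hxS), Sum.inr.injEq] at hxx'
    exact hxx' ▸ hxS
  · intro hxS
    exact ⟨⟨x, hS hxS⟩, ⟨x, hxS, pushoutMap_of_notMem A f (hS hxS)⟩, rfl⟩

variable {A f} {cX : Set X → Set X} {cY : Set Y → Set Y}

theorem pushoutClosure_image_of_subset_compl (hYempty : cY ∅ = ∅) {B : Set X} (hB : B ⊆ Aᶜ) :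
    pushoutClosure A f cX cY (pushoutMap A f '' B) = pushoutMap A f '' cX B := by
  have hinl : Sum.inl ⁻¹' (pushoutMap A f '' B) = ∅ := by
    rw [inl_preimage_image_pushoutMap, Set.image_eq_empty, ← Set.disjoint_iff_inter_eq_empty,
      ← Set.subset_compl_iff_disjoint_right]
    exact hB
  rw [pushoutClosure, hinl, hYempty, val_image_inr_preimage_image_pushoutMap A f hB,
    Set.image_empty, Set.empty_union]

theorem closure_inl_preimage_subset_inl_preimage_pushoutClosure (B : Set (Y ⊕ {x : X // x ∉ A})) :
    cY (Sum.inl ⁻¹' B) ⊆ Sum.inl ⁻¹' pushoutClosure A f cX cY B :=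
  fun y hy => Or.inl ⟨y, hy, rfl⟩

end Pushout

theorem pushout_topological_implies_closed_general {X Y : Type*}
    (cX : Set X → Set X) (cY : Set Y → Set Y)
    (hYempty : cY ∅ = ∅) (hYext : ∀ B : Set Y, B ⊆ cY B)
    (A : Set X) (f : X → Y)
    (hidem : ∀ B : Set (Y ⊕ {x : X // x ∉ A}),
      pushoutClosure A f cX cY (pushoutClosure A f cX cY B) = pushoutClosure A f cX cY B)
    (hcond : ∀ C : Set X, C ⊆ A → cX C ∩ A = C → ∃ B : Set X, B ⊆ Aᶜ ∧ cX B ∩ A = C) :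
    ∀ C : Set X, C ⊆ A → cX C ∩ A = C → cY (f '' C) = f '' C := by
  intro C hCA hCcl
  obtain ⟨B, hBA, hB⟩ := hcond C hCA hCcl
  have hclosed : pushoutClosure A f cX cY (pushoutMap A f '' cX B) = pushoutMap A f '' cX B := by
    rw [← pushoutClosure_image_of_subset_compl hYempty hBA]
    exact hidem _
  refine Set.Subset.antisymm ?_ (hYext _)
  have h := closure_inl_preimage_subset_inl_preimage_pushoutClosure (f := f) (cX := cX) (cY := cY)
    (pushoutMap A f '' cX B)
  rwa [hclosed, inl_preimage_image_pushoutMap, hB] at h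

/-- Theorem 4.1(2): if the closure-space pushout of `f : (A, c_A) → (Y, c_Y)` along a
closed inclusion `A ↪ (X, c_X)` of topological spaces is a topological space, and every
closed `C ⊆ A` is of the form `(c_X B) ∩ A` for some `B ⊆ X \ A`, then `f` is closed. -/
theorem pushout_topological_implies_closed {X Y : Type*}
    (cX : Set X → Set X) (cY : Set Y → Set Y)
    (hXempty : cX ∅ = ∅) (hXext : ∀ B : Set X, B ⊆ cX B)
    (hXunion : ∀ B B' : Set X, cX (B ∪ B') = cX B ∪ cX B')
    (hXidem : ∀ B : Set X, cX (cX B) = cX B)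
    (hYempty : cY ∅ = ∅) (hYext : ∀ B : Set Y, B ⊆ cY B)
    (hYunion : ∀ B B' : Set Y, cY (B ∪ B') = cY B ∪ cY B')
    (hYidem : ∀ B : Set Y, cY (cY B) = cY B)
    (A : Set X) (hA : cX A = A) (f : X → Y)
    (hf : ∀ B : Set X, B ⊆ A → f '' (cX B ∩ A) ⊆ cY (f '' B))
    (hidem : ∀ B : Set (Y ⊕ {x : X // x ∉ A}),
      pushoutClosure A f cX cY (pushoutClosure A f cX cY B) = pushoutClosure A f cX cY B)
    (hcond : ∀ C : Set X, C ⊆ A → cX C ∩ A = C → ∃ B : Set X, B ⊆ Aᶜ ∧ cX B ∩ A = C) :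
    ∀ C : Set X, C ⊆ A → cX C ∩ A = C → cY (f '' C) = f '' C :=
  pushout_topological_implies_closed_general cX cY hYempty hYext A f hidem hcond
end

section
/- The coproduct of inclusions of boundary spheres into disks satisfies the surjectivity-onto-closed-sets condition: let X = ⨆_{k ∈ K} D^{n_k} with n_k ≥ 1 and A = ⨆_{k ∈ K} S^{n_k - 1} ⊆ X. Then for every closed subset C ⊆ A there exists B ⊆ X \ A such that (c_X B) ∩ A = C, where c_X is the closure operator of X (componentwise topological closure). -/
/-!
Take `B` to be the union of the radial segments `[1/2, 1) • x` below the points `x ∈ C`.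
Every `x ∈ C` is the limit of `t • x` as `t → 1⁻`, and conversely the normalization
`y ↦ ‖y‖⁻¹ • y` is continuous near the sphere, maps `B` into `C` and fixes the sphere,
so the closure of `B` meets the sphere exactly in the closure of `C`, which is `C`.
-/

open Set Metric Filter Topology Pointwise

section RadialSegments

variable {E : Type*} [NormedAddCommGroup E] [NormedSpace ℝ E]

def radialSegments (S : Set E) : Set E := Ico (1 / 2 : ℝ) 1 • S

variable {S : Set E}

theorem radialSegments_subset_ball (hS : S ⊆ sphere 0 1) : radialSegments S ⊆ ball 0 1 := by
  rintro _ ⟨t, ⟨ht₀, ht₁⟩, x, hx, rfl⟩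
  have hx : ‖x‖ = 1 := by simpa using hS hx
  rw [mem_ball_zero_iff, norm_smul, hx, mul_one, Real.norm_of_nonneg (by linarith)]
  exact ht₁

theorem subset_closure_radialSegments : S ⊆ closure (radialSegments S) := by
  intro x hx
  have hlim : Tendsto (fun t : ℝ ↦ t • x) (𝓝[<] 1) (𝓝 x) :=
    ((continuous_id.smul continuous_const).tendsto' 1 x (one_smul ℝ x)).mono_left
      nhdsWithin_le_nhds
  refine mem_closure_of_tendsto hlim ?_
  filter_upwards [Ico_mem_nhdsLT (by norm_num : (1 / 2 : ℝ) < 1)] with t ht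
  exact smul_mem_smul ht hx

theorem inv_norm_smul_mem_of_mem_radialSegments (hS : S ⊆ sphere 0 1) {y : E}
    (hy : y ∈ radialSegments S) : ‖y‖⁻¹ • y ∈ S := by
  obtain ⟨t, ⟨ht₀, -⟩, x, hx, rfl⟩ := hy
  have hx₁ : ‖x‖ = 1 := by simpa using hS hx
  have ht : t ≠ 0 := by positivity
  rwa [norm_smul, hx₁, mul_one, Real.norm_of_nonneg (by linarith), smul_smul,
    inv_mul_cancel₀ ht, one_smul]

theorem closure_radialSegments_inter_sphere (hS : S ⊆ sphere 0 1) :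
    closure (radialSegments S) ∩ sphere 0 1 = closure S ∩ sphere 0 1 := by
  refine Subset.antisymm ?_ (inter_subset_inter_left _ ?_)
  · rintro y ⟨hyB, hy⟩
    have hy₁ : ‖y‖ = 1 := by simpa using hy
    have hcont : ContinuousAt (fun z : E ↦ ‖z‖⁻¹ • z) y :=
      (continuous_norm.continuousAt.inv₀ (by simp [hy₁])).smul continuousAt_id
    have hmaps : (fun z : E ↦ ‖z‖⁻¹ • z) '' radialSegments S ⊆ S :=
      image_subset_iff.mpr fun _ ↦ inv_norm_smul_mem_of_mem_radialSegments hS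
    exact ⟨by simpa [hy₁] using closure_mono hmaps (mem_closure_image hcont hyB), hy⟩
  · simpa using closure_mono (subset_closure_radialSegments (S := S))

end RadialSegments

theorem spheres_in_disks_condition_general {K : Type*} (n : K → ℕ) :
    letI X : Type _ := (k : K) × ↥(Metric.closedBall (0 : EuclideanSpace ℝ (Fin (n k))) 1)
    letI A : Set X := {p | ‖(p.2 : EuclideanSpace ℝ (Fin (n p.1)))‖ = 1}
    letI cX : Set X → Set X := fun S => {p | p.2 ∈ closure {x | (⟨p.1, x⟩ : X) ∈ S}}
    ∀ C : Set X, C ⊆ A → cX C ∩ A = C → ∃ B : Set X, B ⊆ Aᶜ ∧ cX B ∩ A = C := by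
  intro C hCA hC
  let S (k : K) : Set (EuclideanSpace ℝ (Fin (n k))) := Subtype.val '' {x | ⟨k, x⟩ ∈ C}
  have hS (k : K) : S k ⊆ sphere 0 1 := by
    rintro _ ⟨x, hx, rfl⟩
    simpa using hCA hx
  refine ⟨{p | (p.2 : EuclideanSpace ℝ (Fin (n p.1))) ∈ radialSegments (S p.1)}, ?_, ?_⟩
  · intro p hp hpA
    simpa [show ‖(p.2 : EuclideanSpace ℝ (Fin (n p.1)))‖ = 1 from hpA] using
      radialSegments_subset_ball (hS p.1) hp
  · ext ⟨k, x⟩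
    have himage : Subtype.val '' {y : closedBall (0 : EuclideanSpace ℝ (Fin (n k))) 1 |
        (y : EuclideanSpace ℝ (Fin (n k))) ∈ radialSegments (S k)} = radialSegments (S k) :=
      (Subtype.image_preimage_coe _ _).trans <| inter_eq_right.mpr <|
        (radialSegments_subset_ball (hS k)).trans ball_subset_closedBall
    rw [← hC]
    simp only [mem_inter_iff, mem_ofPred_eq, closure_subtype, himage]
    rw [← mem_sphere_zero_iff_norm, ← mem_inter_iff, ← mem_inter_iff,
      closure_radialSegments_inter_sphere (hS k)]

/-- The coproduct of the inclusions of boundary spheres into disks satisfies the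
condition of Theorem 4.1(2): for `X = ⨆_{k ∈ K} D^{n_k}` (with the componentwise
topological closure `c_X`) and `A = ⨆_{k ∈ K} S^{n_k - 1}` the coproduct of boundary
spheres, every closed subset `C ⊆ A` (in the subspace closure) is of the form
`(c_X B) ∩ A` for some `B ⊆ X \ A`. -/
theorem spheres_in_disks_condition {K : Type*} (n : K → ℕ) (hn : ∀ k, 1 ≤ n k) :
    letI X : Type _ := (k : K) × ↥(Metric.closedBall (0 : EuclideanSpace ℝ (Fin (n k))) 1)
    letI A : Set X := {p | ‖(p.2 : EuclideanSpace ℝ (Fin (n p.1)))‖ = 1}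
    letI cX : Set X → Set X := fun S => {p | p.2 ∈ closure {x | (⟨p.1, x⟩ : X) ∈ S}}
    ∀ C : Set X, C ⊆ A → cX C ∩ A = C → ∃ B : Set X, B ⊆ Aᶜ ∧ cX B ∩ A = C :=
  spheres_in_disks_condition_general n
end
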